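/- arXiv:2210.00240 — 8 statements merged into one kernel-verified Lean document; each statement's English description precedes it below -/
import Mathlib

section
/- For every FLIF expression α, every instance D, and (ν₁, ν₂) ∈ ⟦α⟧_D: if ν₁′ agrees with ν₁ on vars(α), and ν₂′ agrees with ν₂ on vars(α) and agrees with ν₁′ outside vars(α), then (ν₁′, ν₂′) ∈ ⟦α⟧_D. (Free variable property / cylindricity outside the variables of α.) -/
/-- FLIF expressions over relation names `ρ`, variables `V`, and domain `D`. -/
inductive FLIF (ρ V D : Type) : Type
  | rel (R : ρ) (xs ys : List V)
  | eqVar (x y : V)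
  | eqConst (x : V) (c : D)
  | assignVar (x y : V)
  | assignConst (x : V) (c : D)
  | comp (a b : FLIF ρ V D)
  | union (a b : FLIF ρ V D)
  | diff (a b : FLIF ρ V D)

namespace FLIF

variable {ρ V D : Type}

/-- Dynamic semantics of FLIF: a binary relation on valuations `V → D`,
given a database instance `I` assigning to each relation name a set of tuples. -/
def sem (I : ρ → Set (List D)) [DecidableEq V] : FLIF ρ V D → (V → D) → (V → D) → Prop
  | rel R xs ys, ν₁, ν₂ =>
      (xs.map ν₁ ++ ys.map ν₂) ∈ I R ∧ ∀ v : V, v ∉ ys → ν₁ v = ν₂ v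
  | eqVar x y, ν₁, ν₂ => ν₁ = ν₂ ∧ ν₁ x = ν₁ y
  | eqConst x c, ν₁, ν₂ => ν₁ = ν₂ ∧ ν₁ x = c
  | assignVar x y, ν₁, ν₂ => ν₂ = Function.update ν₁ x (ν₁ y)
  | assignConst x c, ν₁, ν₂ => ν₂ = Function.update ν₁ x c
  | comp a b, ν₁, ν₂ => ∃ ν, sem I a ν₁ ν ∧ sem I b ν ν₂
  | union a b, ν₁, ν₂ => sem I a ν₁ ν₂ ∨ sem I b ν₁ ν₂
  | diff a b, ν₁, ν₂ => sem I a ν₁ ν₂ ∧ ¬ sem I b ν₁ ν₂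

variable [DecidableEq V]

/-- Syntactic output variables `O(α)`. -/
def outs : FLIF ρ V D → Finset V
  | rel _ _ ys => ys.toFinset
  | eqVar _ _ => ∅
  | eqConst _ _ => ∅
  | assignVar x _ => {x}
  | assignConst x _ => {x}
  | comp a b => outs a ∪ outs b
  | union a b => outs a ∪ outs b
  | diff a _ => outs a

/-- Syntactic input variables `I(α)`. -/
def inps : FLIF ρ V D → Finset V
  | rel _ xs _ => xs.toFinset
  | eqVar x y => {x, y}
  | eqConst x _ => {x}
  | assignVar _ y => {y}
  | assignConst _ _ => ∅
  | comp a b => inps a ∪ (inps b \ outs a)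
  | union a b => inps a ∪ inps b ∪ symmDiff (outs a) (outs b)
  | diff a b => inps a ∪ inps b ∪ symmDiff (outs a) (outs b)

/-- Free variables of an expression: `vars(α) = I(α) ∪ O(α)`. -/
def vars (α : FLIF ρ V D) : Finset V := inps α ∪ outs α

/-- `α` is io-disjoint: every subexpression `β` of `α` (including `α` itself)
satisfies `I(β) ∩ O(β) = ∅`. -/
def ioDisjoint : FLIF ρ V D → Prop
  | comp a b => ioDisjoint a ∧ ioDisjoint b ∧ inps (comp a b) ∩ outs (comp a b) = ∅
  | union a b => ioDisjoint a ∧ ioDisjoint b ∧ inps (union a b) ∩ outs (union a b) = ∅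
  | diff a b => ioDisjoint a ∧ ioDisjoint b ∧ inps (diff a b) ∩ outs (diff a b) = ∅
  | α => inps α ∩ outs α = ∅

end FLIF

/-!
Induction on `α`, for an arbitrary set `S ⊇ vars α` in place of `vars α`, so that all
subexpressions can be treated with the same `S`. For a composition `a ⨾ b` through `ν`, the
middle valuation of the primed run is `ν` on `S` and `ν₁'` off `S`. For a difference `a ∖ b`
the induction hypothesis for `b` is applied backwards, from the primed pair to the unprimed one; this needs
`ν₂ = ν₁` off `S`, which holds because a run of `a` leaves every variable outside `outs a` fixed.
-/

namespace FLIF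

open Set

variable {ρ V D : Type}

theorem apply_eq_of_eqOn {S : Set V} {ν₁ ν₂ ν₁' ν₂' : V → D}
    (h₁ : EqOn ν₁' ν₁ S) (h₂ : EqOn ν₂' ν₂ S) (h₃ : EqOn ν₂' ν₁' Sᶜ)
    {v : V} (hv : ν₁ v = ν₂ v) : ν₁' v = ν₂' v := by
  by_cases hvS : v ∈ S
  · rw [h₁ hvS, h₂ hvS, hv]
  · exact (h₃ hvS).symm

variable [DecidableEq V]

theorem vars_comp (a b : FLIF ρ V D) : vars (comp a b) = vars a ∪ vars b := by
  ext v
  simp only [vars, inps, outs, Finset.mem_union, Finset.mem_sdiff]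
  tauto

theorem vars_union (a b : FLIF ρ V D) : vars (union a b) = vars a ∪ vars b := by
  ext v
  simp only [vars, inps, outs, Finset.mem_union, Finset.mem_symmDiff]
  tauto

theorem vars_diff (a b : FLIF ρ V D) : vars (diff a b) = vars a ∪ vars b := by
  ext v
  simp only [vars, inps, outs, Finset.mem_union, Finset.mem_symmDiff]
  tauto

theorem outs_subset_vars (α : FLIF ρ V D) : outs α ⊆ vars α :=
  Finset.subset_union_right

theorem sem_eqOn_compl_outs {I : ρ → Set (List D)} {α : FLIF ρ V D} {ν₁ ν₂ : V → D}
    (h : sem I α ν₁ ν₂) : EqOn ν₁ ν₂ (↑(outs α))ᶜ := by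
  induction α generalizing ν₁ ν₂ with
  | rel R xs ys => exact fun v hv => h.2 v (by simpa [outs] using hv)
  | eqVar | eqConst => rw [h.1]; exact eqOn_refl _ _
  | assignVar x | assignConst x =>
    intro v hv
    rw [h, Function.update_of_ne (by simpa [outs] using hv)]
  | comp a b iha ihb =>
    obtain ⟨ν, ha, hb⟩ := h
    intro v hv
    simp only [outs, Finset.coe_union, compl_union] at hv
    exact (iha ha hv.1).trans (ihb hb hv.2)
  | union a b iha ihb =>
    simp only [outs, Finset.coe_union, compl_union]
    rcases h with h | h
    · exact (iha h).mono inter_subset_left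
    · exact (ihb h).mono inter_subset_right
  | diff a b iha => exact iha h.1

theorem sem_of_eqOn (I : ρ → Set (List D)) {α : FLIF ρ V D} {S : Set V}
    {ν₁ ν₂ ν₁' ν₂' : V → D} (hS : ↑(vars α) ⊆ S)
    (h : sem I α ν₁ ν₂) (h₁ : EqOn ν₁' ν₁ S) (h₂ : EqOn ν₂' ν₂ S) (h₃ : EqOn ν₂' ν₁' Sᶜ) :
    sem I α ν₁' ν₂' := by
  induction α generalizing ν₁ ν₂ ν₁' ν₂' with
  | rel R xs ys =>
    have hxs : xs.map ν₁' = xs.map ν₁ :=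
      List.map_congr_left fun v hv => h₁ (hS (by simp [vars, inps, hv]))
    have hys : ys.map ν₂' = ys.map ν₂ :=
      List.map_congr_left fun v hv => h₂ (hS (by simp [vars, outs, hv]))
    exact ⟨hxs ▸ hys ▸ h.1, fun v hv => apply_eq_of_eqOn h₁ h₂ h₃ (h.2 v hv)⟩
  | eqVar x y =>
    have hx : x ∈ S := hS (by simp [vars, inps])
    have hy : y ∈ S := hS (by simp [vars, inps])
    exact ⟨funext fun v => apply_eq_of_eqOn h₁ h₂ h₃ (by rw [h.1]),
      by rw [h₁ hx, h₁ hy, h.2]⟩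
  | eqConst x c =>
    have hx : x ∈ S := hS (by simp [vars, inps])
    exact ⟨funext fun v => apply_eq_of_eqOn h₁ h₂ h₃ (by rw [h.1]), by rw [h₁ hx, h.2]⟩
  | assignVar x y =>
    have hx : x ∈ S := hS (by simp [vars, outs])
    have hy : y ∈ S := hS (by simp [vars, inps])
    funext v
    by_cases hvx : v = x
    · subst hvx
      rw [h₂ hx, h, Function.update_self, Function.update_self, h₁ hy]
    · rw [Function.update_of_ne hvx]
      exact (apply_eq_of_eqOn h₁ h₂ h₃ (by rw [h, Function.update_of_ne hvx])).symm
  | assignConst x c =>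
    have hx : x ∈ S := hS (by simp [vars, outs])
    funext v
    by_cases hvx : v = x
    · subst hvx
      rw [h₂ hx, h, Function.update_self, Function.update_self]
    · rw [Function.update_of_ne hvx]
      exact (apply_eq_of_eqOn h₁ h₂ h₃ (by rw [h, Function.update_of_ne hvx])).symm
  | comp a b iha ihb =>
    rw [vars_comp, Finset.coe_union, union_subset_iff] at hS
    obtain ⟨ν, ha, hb⟩ := h
    classical
    let ν' := S.piecewise ν ν₁'
    refine ⟨ν', iha hS.1 ha h₁ (piecewise_eqOn ..) (piecewise_eqOn_compl ..),
      ihb hS.2 hb (piecewise_eqOn ..) h₂ fun v hv =>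
        (h₃ hv).trans (piecewise_eqOn_compl S ν ν₁' hv).symm⟩
  | union a b iha ihb =>
    rw [vars_union, Finset.coe_union, union_subset_iff] at hS
    exact h.imp (iha hS.1 · h₁ h₂ h₃) (ihb hS.2 · h₁ h₂ h₃)
  | diff a b iha ihb =>
    rw [vars_diff, Finset.coe_union, union_subset_iff] at hS
    obtain ⟨ha, hnb⟩ := h
    have hoa : ↑(outs a) ⊆ S := (Finset.coe_subset.2 (outs_subset_vars a)).trans hS.1
    have h₃' : EqOn ν₂ ν₁ Sᶜ := fun v hv =>
      (sem_eqOn_compl_outs ha (compl_subset_compl.2 hoa hv)).symm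
    exact ⟨iha hS.1 ha h₁ h₂ h₃, fun hb => hnb (ihb hS.2 hb h₁.symm h₂.symm h₃')⟩

end FLIF

/-- **Free variable property.** The semantics of `α` is cylindrical outside
`vars(α)`. -/
theorem free_variable_property {ρ V D : Type} [DecidableEq V] (I : ρ → Set (List D))
    (α : FLIF ρ V D) (ν₁ ν₂ ν₁' ν₂' : V → D)
    (h : FLIF.sem I α ν₁ ν₂)
    (h₁ : ∀ v ∈ FLIF.vars α, ν₁' v = ν₁ v)
    (h₂ : ∀ v ∈ FLIF.vars α, ν₂' v = ν₂ v)
    (h₃ : ∀ v ∉ FLIF.vars α, ν₂' v = ν₁' v) :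
    FLIF.sem I α ν₁' ν₂' :=
  FLIF.sem_of_eqOn I subset_rfl h (fun v hv => h₁ v hv) (fun v hv => h₂ v hv)
    (fun v hv => h₃ v hv)
end

section
/- For every FLIF expression α, every instance D, and (ν₁, ν₂) ∈ ⟦α⟧_D: if ν₁′ is a valuation agreeing with ν₁ on the syntactic input set I(α), then there exists ν₂′ agreeing with ν₂ on O(α) such that (ν₁′, ν₂′) ∈ ⟦α⟧_D. (Input-output determinacy.) -/
namespace FLIF

variable {ρ V D : Type}

variable [DecidableEq V]

/-!
Structural induction on `α`, for all pairs of valuations at once. Besides the induction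
hypotheses, the only fact used is inertia: a run of `α` changes no variable outside `O(α)`. For
`α₁ ∪ α₂` and `α₁ − α₂`, a variable in one output set but not in the other is an input, so inertia
fixes its value in both runs. In the difference case, a run of `α₂` from the new inputs is
transported back to the old ones by the induction hypothesis, which is why it must hold for
arbitrary start valuations.
-/

open Set

variable {I : ρ → Set (List D)}

theorem sem.eq_of_notMem_outs {α : FLIF ρ V D} {ν₁ ν₂ : V → D} (h : sem I α ν₁ ν₂) {v : V}
    (hv : v ∉ outs α) : ν₁ v = ν₂ v := by
  induction α generalizing ν₁ ν₂ with
  | rel R xs ys => exact h.2 v (by simpa [outs] using hv)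
  | eqVar | eqConst => rw [h.1]
  | assignVar x y | assignConst x c =>
    rw [h, Function.update_of_ne (by simpa [outs] using hv)]
  | comp a b iha ihb =>
    obtain ⟨ν, ha, hb⟩ := h
    simp only [outs, Finset.mem_union, not_or] at hv
    exact (iha ha hv.1).trans (ihb hb hv.2)
  | union a b iha ihb =>
    simp only [outs, Finset.mem_union, not_or] at hv
    exact h.elim (iha · hv.1) (ihb · hv.2)
  | diff a b iha => exact iha h.1 hv

theorem eqOn_union_outs_of_sem {α : FLIF ρ V D} {ν₁ ν₂ ν₁' ν₂' : V → D} {s : Set V}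
    (h : sem I α ν₁ ν₂) (h' : sem I α ν₁' ν₂') (hin : EqOn ν₁' ν₁ s)
    (hout : EqOn ν₂' ν₂ (outs α)) : EqOn ν₂' ν₂ (s ∪ outs α) := by
  intro v hv
  by_cases hvo : v ∈ outs α
  · exact hout hvo
  · calc ν₂' v = ν₁' v := (h'.eq_of_notMem_outs hvo).symm
      _ = ν₁ v := hin (hv.resolve_right hvo)
      _ = ν₂ v := h.eq_of_notMem_outs hvo

theorem inps_left_subset_inps_comp (a b : FLIF ρ V D) :
    (inps a : Set V) ⊆ inps (comp a b) := by
  intro v; simp +contextual [inps]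

theorem inps_right_subset_inps_comp_union_outs (a b : FLIF ρ V D) :
    (inps b : Set V) ⊆ inps (comp a b) ∪ outs a := by
  intro v; simp only [inps, Finset.coe_union, Finset.coe_sdiff, mem_union, mem_sdiff]; tauto

theorem inps_left_subset_inps_union (a b : FLIF ρ V D) :
    (inps a : Set V) ⊆ inps (union a b) := by
  intro v; simp +contextual [inps]

theorem inps_right_subset_inps_union (a b : FLIF ρ V D) :
    (inps b : Set V) ⊆ inps (union a b) := by
  intro v; simp +contextual [inps]

theorem outs_union_subset_inps_union_outs_left (a b : FLIF ρ V D) :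
    (outs (union a b) : Set V) ⊆ inps (union a b) ∪ outs a := by
  intro v; simp only [inps, outs, Finset.coe_union, mem_union, Finset.mem_coe, Finset.mem_symmDiff]; tauto

theorem outs_union_subset_inps_union_outs_right (a b : FLIF ρ V D) :
    (outs (union a b) : Set V) ⊆ inps (union a b) ∪ outs b := by
  intro v; simp only [inps, outs, Finset.coe_union, mem_union, Finset.mem_coe, Finset.mem_symmDiff]; tauto

variable (I) in
def IODeterminate (α : FLIF ρ V D) : Prop :=
  ∀ ⦃ν₁ ν₂ ν₁' : V → D⦄, sem I α ν₁ ν₂ → EqOn ν₁' ν₁ (inps α) →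
    ∃ ν₂', EqOn ν₂' ν₂ (outs α) ∧ sem I α ν₁' ν₂'

theorem ioDeterminate_rel (R : ρ) (xs ys : List V) : IODeterminate I (rel R xs ys) := by
  rintro ν₁ ν₂ ν₁' ⟨hmem, -⟩ hin
  have hxs : xs.map ν₁' = xs.map ν₁ :=
    List.map_congr_left fun x hx => hin (by simpa [inps] using hx)
  have hys : ys.map (fun v => if v ∈ ys then ν₂ v else ν₁' v) = ys.map ν₂ :=
    List.map_congr_left fun y hy => if_pos hy
  refine ⟨fun v => if v ∈ ys then ν₂ v else ν₁' v, fun v hv => if_pos (by simpa [outs] using hv),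
    ?_, fun v hv => (if_neg hv).symm⟩
  rwa [hxs, hys]

theorem ioDeterminate_eqVar (x y : V) : IODeterminate I (eqVar (D := D) x y) := by
  rintro ν₁ _ ν₁' ⟨rfl, hxy⟩ hin
  refine ⟨ν₁', by simp [outs], rfl, ?_⟩
  rwa [hin (show x ∈ _ by simp [inps]), hin (show y ∈ _ by simp [inps])]

theorem ioDeterminate_eqConst (x : V) (c : D) : IODeterminate I (eqConst x c) := by
  rintro ν₁ _ ν₁' ⟨rfl, hx⟩ hin
  exact ⟨ν₁', by simp [outs], rfl, (hin (show x ∈ _ by simp [inps])).trans hx⟩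

theorem ioDeterminate_assignVar (x y : V) : IODeterminate I (assignVar (D := D) x y) := by
  rintro ν₁ _ ν₁' rfl hin
  refine ⟨_, ?_, rfl⟩
  intro v hv
  obtain rfl : v = x := by simpa [outs] using hv
  simp [hin (show y ∈ _ by simp [inps])]

theorem ioDeterminate_assignConst (x : V) (c : D) : IODeterminate I (assignConst x c) := by
  rintro ν₁ _ ν₁' rfl -
  refine ⟨_, ?_, rfl⟩
  intro v hv
  obtain rfl : v = x := by simpa [outs] using hv
  simp

theorem IODeterminate.comp {a b : FLIF ρ V D} (ha : IODeterminate I a) (hb : IODeterminate I b) :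
    IODeterminate I (comp a b) := by
  rintro ν₁ ν₂ ν₁' ⟨ν, hsa, hsb⟩ hin
  obtain ⟨μ, hμ, hsa'⟩ := ha hsa (hin.mono (inps_left_subset_inps_comp a b))
  have hμb : EqOn μ ν (inps b) :=
    (eqOn_union_outs_of_sem hsa hsa' hin hμ).mono (inps_right_subset_inps_comp_union_outs a b)
  obtain ⟨ν₂', hν₂', hsb'⟩ := hb hsb hμb
  refine ⟨ν₂', ?_, μ, hsa', hsb'⟩
  simpa [outs, union_comm] using eqOn_union_outs_of_sem hsb hsb' hμ hν₂'

theorem IODeterminate.union {a b : FLIF ρ V D} (ha : IODeterminate I a)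
    (hb : IODeterminate I b) : IODeterminate I (union a b) := by
  rintro ν₁ ν₂ ν₁' (hsa | hsb) hin
  · obtain ⟨ν₂', hν₂', hsa'⟩ := ha hsa (hin.mono (inps_left_subset_inps_union a b))
    exact ⟨ν₂', (eqOn_union_outs_of_sem hsa hsa' hin hν₂').mono
      (outs_union_subset_inps_union_outs_left a b), Or.inl hsa'⟩
  · obtain ⟨ν₂', hν₂', hsb'⟩ := hb hsb (hin.mono (inps_right_subset_inps_union a b))
    exact ⟨ν₂', (eqOn_union_outs_of_sem hsb hsb' hin hν₂').mono
      (outs_union_subset_inps_union_outs_right a b), Or.inr hsb'⟩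

theorem IODeterminate.diff {a b : FLIF ρ V D} (ha : IODeterminate I a)
    (hb : IODeterminate I b) : IODeterminate I (diff a b) := by
  rintro ν₁ ν₂ ν₁' ⟨hsa, hnsb⟩ hin
  obtain ⟨ν₂', hν₂', hsa'⟩ := ha hsa (hin.mono (inps_left_subset_inps_union a b))
  refine ⟨ν₂', hν₂', hsa', fun hsb' => hnsb ?_⟩
  -- Transporting this run of `b` back to the inputs `ν₁` must land exactly on `ν₂`.
  obtain ⟨ν₂'', hν₂'', hsb''⟩ := hb hsb' (hin.symm.mono (inps_right_subset_inps_union a b))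
  have hon : EqOn ν₂'' ν₂ (outs (FLIF.union a b)) :=
    ((eqOn_union_outs_of_sem hsb' hsb'' hin.symm hν₂'').mono
      (outs_union_subset_inps_union_outs_right a b)).trans
    ((eqOn_union_outs_of_sem hsa hsa' hin hν₂').mono (outs_union_subset_inps_union_outs_left a b))
  suffices ν₂'' = ν₂ from this ▸ hsb''
  funext v
  by_cases hv : v ∈ outs (FLIF.union a b)
  · exact hon hv
  · simp only [outs, Finset.mem_union, not_or] at hv
    exact (hsb''.eq_of_notMem_outs hv.2).symm.trans (hsa.eq_of_notMem_outs hv.1)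

theorem ioDeterminate (α : FLIF ρ V D) : IODeterminate I α := by
  induction α with
  | rel R xs ys => exact ioDeterminate_rel R xs ys
  | eqVar x y => exact ioDeterminate_eqVar x y
  | eqConst x c => exact ioDeterminate_eqConst x c
  | assignVar x y => exact ioDeterminate_assignVar x y
  | assignConst x c => exact ioDeterminate_assignConst x c
  | comp a b iha ihb => exact iha.comp ihb
  | union a b iha ihb => exact iha.union ihb
  | diff a b iha ihb => exact iha.diff ihb

end FLIF

/-- **Input-output determinacy.** The values of the input variables determine
the values of the output variables. -/
theorem input_output_determinacy {ρ V D : Type} [DecidableEq V] (I : ρ → Set (List D))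
    (α : FLIF ρ V D) (ν₁ ν₂ ν₁' : V → D)
    (h : FLIF.sem I α ν₁ ν₂)
    (h₁ : ∀ v ∈ FLIF.inps α, ν₁' v = ν₁ v) :
    ∃ ν₂' : V → D, (∀ v ∈ FLIF.outs α, ν₂' v = ν₂ v) ∧ FLIF.sem I α ν₁' ν₂' :=
  FLIF.ioDeterminate α h fun v hv => h₁ v hv
end

section
/- Input-output determinacy in alternative form: for every FLIF expression α, instance D, and (ν₁, ν₂) ∈ ⟦α⟧_D, if ν₁′ agrees with ν₁ on I(α) and also agrees with ν₁ outside O(α), then (ν₁′, ν₂) ∈ ⟦α⟧_D. -/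
namespace FLIF

lemma inertia {ρ V D : Type} [DecidableEq V] (I : ρ → Set (List D)) :
    ∀ (α : FLIF ρ V D) (ν₁ ν₂ : V → D), sem I α ν₁ ν₂ → ∀ v ∉ outs α, ν₁ v = ν₂ v := by
  intro α
  induction α with
  | rel R xs ys =>
      intro ν₁ ν₂ h v hv
      exact h.2 v (by simpa [outs] using hv)
  | eqVar x y => intro ν₁ ν₂ h v hv; rw [h.1]
  | eqConst x c => intro ν₁ ν₂ h v hv; rw [h.1]
  | assignVar x y =>
      intro ν₁ ν₂ h v hv
      rw [show ν₂ = _ from h, Function.update_of_ne (by simpa [outs] using hv)]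
  | assignConst x c =>
      intro ν₁ ν₂ h v hv
      rw [show ν₂ = _ from h, Function.update_of_ne (by simpa [outs] using hv)]
  | comp a b iha ihb =>
      intro ν₁ ν₂ h v hv
      obtain ⟨ν, ha, hb⟩ := h
      simp only [outs, Finset.mem_union, not_or] at hv
      exact (iha ν₁ ν ha v hv.1).trans (ihb ν ν₂ hb v hv.2)
  | union a b iha ihb =>
      intro ν₁ ν₂ h v hv
      simp only [outs, Finset.mem_union, not_or] at hv
      rcases h with h | h
      · exact iha ν₁ ν₂ h v hv.1
      · exact ihb ν₁ ν₂ h v hv.2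
  | diff a b iha ihb =>
      intro ν₁ ν₂ h v hv
      exact iha ν₁ ν₂ h.1 v (by simpa [outs] using hv)

lemma key {ρ V D : Type} [DecidableEq V] (I : ρ → Set (List D)) :
    ∀ (α : FLIF ρ V D) (ν₁ ν₂ ν₁' : V → D), sem I α ν₁ ν₂ →
      (∀ v ∈ inps α, ν₁' v = ν₁ v) →
      sem I α ν₁' (fun v => if v ∈ outs α then ν₂ v else ν₁' v) := by
  intro α
  induction α with
  | rel R xs ys =>
      intro ν₁ ν₂ ν₁' h h₁
      obtain ⟨hmem, hfr⟩ : _ ∧ _ := h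
      simp only [sem, outs]
      constructor
      · have e1 : xs.map ν₁' = xs.map ν₁ :=
          List.map_congr_left fun a ha => h₁ a (by simp [inps, ha])
        have e2 : ys.map (fun v => if v ∈ ys.toFinset then ν₂ v else ν₁' v)
            = ys.map ν₂ :=
          List.map_congr_left fun a ha => by simp [ha]
        rw [e1]
        exact (congrArg (· ∈ I R) (show List.map ν₁ xs ++ List.map (fun v => if v ∈ ys.toFinset then ν₂ v else ν₁' v) ys = List.map ν₁ xs ++ List.map ν₂ ys by rw [e2])).mpr hmem
      · intro v hv
        simp [hv]
  | eqVar x y =>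
      intro ν₁ ν₂ ν₁' h h₁
      obtain ⟨he, hxy⟩ : _ ∧ _ := h
      have hx := h₁ x (by simp [inps])
      have hy := h₁ y (by simp [inps])
      refine ⟨?_, ?_⟩
      · funext v; simp [outs]
      · show ν₁' x = ν₁' y
        rw [hx, hy, hxy]
  | eqConst x c =>
      intro ν₁ ν₂ ν₁' h h₁
      obtain ⟨he, hxc⟩ : _ ∧ _ := h
      have hx := h₁ x (by simp [inps])
      refine ⟨?_, ?_⟩
      · funext v; simp [outs]
      · show ν₁' x = c
        rw [hx, hxc]
  | assignVar x y =>
      intro ν₁ ν₂ ν₁' h h₁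
      have h' : ν₂ = Function.update ν₁ x (ν₁ y) := h
      have hy := h₁ y (by simp [inps])
      show _ = Function.update ν₁' x (ν₁' y)
      funext v
      by_cases hv : v = x
      · subst hv
        simp [outs, h', hy]
      · simp [outs, hv, Function.update_of_ne hv]
  | assignConst x c =>
      intro ν₁ ν₂ ν₁' h h₁
      have h' : ν₂ = Function.update ν₁ x c := h
      show _ = Function.update ν₁' x c
      funext v
      by_cases hv : v = x
      · subst hv
        simp [outs, h']
      · simp [outs, hv, Function.update_of_ne hv]
  | comp a b iha ihb =>
      intro ν₁ ν₂ ν₁' h h₁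
      obtain ⟨ν, ha, hb⟩ := h
      have h₁a : ∀ v ∈ inps a, ν₁' v = ν₁ v := fun v hv =>
        h₁ v (by simp [inps, hv])
      have ha' := iha ν₁ ν ν₁' ha h₁a
      set ν' : V → D := fun v => if v ∈ outs a then ν v else ν₁' v with hν'
      have h₁b : ∀ v ∈ inps b, ν' v = ν v := by
        intro v hv
        by_cases hva : v ∈ outs a
        · simp [hν', hva]
        · have : ν₁' v = ν₁ v := h₁ v (by simp [inps, hv, hva])
          have h2 : ν₁ v = ν v := inertia I a ν₁ ν ha v hva
          simp [hν', hva, this, h2]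
      have hb' := ihb ν ν₂ ν' hb h₁b
      refine ⟨ν', ha', ?_⟩
      have : (fun v => if v ∈ outs b then ν₂ v else ν' v)
          = fun v => if v ∈ outs (comp a b) then ν₂ v else ν₁' v := by
        funext v
        by_cases hvb : v ∈ outs b
        · simp [outs, hvb]
        · by_cases hva : v ∈ outs a
          · have : ν v = ν₂ v := inertia I b ν ν₂ hb v hvb
            simp [outs, hvb, hva, hν', this]
          · simp [outs, hvb, hva, hν']
      rw [← this]; exact hb'
  | union a b iha ihb =>
      intro ν₁ ν₂ ν₁' h h₁
      rcases h with h | h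
      · have h₁a : ∀ v ∈ inps a, ν₁' v = ν₁ v := fun v hv =>
          h₁ v (by simp [inps, hv])
        have ha' := iha ν₁ ν₂ ν₁' h h₁a
        left
        have : (fun v => if v ∈ outs a then ν₂ v else ν₁' v)
            = fun v => if v ∈ outs (union a b) then ν₂ v else ν₁' v := by
          funext v
          by_cases hva : v ∈ outs a
          · simp [outs, hva]
          · by_cases hvb : v ∈ outs b
            · have hsd : v ∈ inps (union a b) := by
                simp [inps, Finset.mem_symmDiff, hva, hvb]
              have e1 : ν₁' v = ν₁ v := h₁ v hsd
              have e2 : ν₁ v = ν₂ v := inertia I a ν₁ ν₂ h v hva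
              simp [outs, hva, hvb, e1, e2]
            · simp [outs, hva, hvb]
        rw [← this]; exact ha'
      · have h₁b : ∀ v ∈ inps b, ν₁' v = ν₁ v := fun v hv =>
          h₁ v (by simp [inps, hv])
        have hb' := ihb ν₁ ν₂ ν₁' h h₁b
        right
        have : (fun v => if v ∈ outs b then ν₂ v else ν₁' v)
            = fun v => if v ∈ outs (union a b) then ν₂ v else ν₁' v := by
          funext v
          by_cases hvb : v ∈ outs b
          · simp [outs, hvb]
          · by_cases hva : v ∈ outs a
            · have hsd : v ∈ inps (union a b) := by
                simp [inps, Finset.mem_symmDiff, hva, hvb]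
              have e1 : ν₁' v = ν₁ v := h₁ v hsd
              have e2 : ν₁ v = ν₂ v := inertia I b ν₁ ν₂ h v hvb
              simp [outs, hva, hvb, e1, e2]
            · simp [outs, hva, hvb]
        rw [← this]; exact hb'
  | diff a b iha ihb =>
      intro ν₁ ν₂ ν₁' h h₁
      obtain ⟨ha, hnb⟩ := h
      have h₁a : ∀ v ∈ inps a, ν₁' v = ν₁ v := fun v hv =>
        h₁ v (by simp [inps, hv])
      have ha' := iha ν₁ ν₂ ν₁' ha h₁a
      set ν₂' : V → D := fun v => if v ∈ outs a then ν₂ v else ν₁' v with hν₂'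
      have houts : outs (diff a b) = outs a := rfl
      refine ⟨by rw [houts]; exact ha', ?_⟩
      rw [houts]
      intro hb'
      apply hnb
      -- reverse: ν₁ agrees with ν₁' on inps b
      have h₁b : ∀ v ∈ inps b, ν₁ v = ν₁' v := fun v hv =>
        (h₁ v (by simp [inps, hv])).symm
      have hb'' := ihb ν₁' ν₂' ν₁ hb' h₁b
      have : (fun v => if v ∈ outs b then ν₂' v else ν₁ v) = ν₂ := by
        funext v
        by_cases hvb : v ∈ outs b
        · by_cases hva : v ∈ outs a
          · simp [hν₂', hvb, hva]
          · have hsd : v ∈ inps (diff a b) := by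
              simp [inps, Finset.mem_symmDiff, hva, hvb]
            have e1 : ν₁' v = ν₁ v := h₁ v hsd
            have e2 : ν₁ v = ν₂ v := inertia I a ν₁ ν₂ ha v hva
            simp [hν₂', hvb, hva, e1, e2]
        · by_cases hva : v ∈ outs a
          · -- inertia of b on sem b ν₁' ν₂'
            have e1 : ν₁' v = ν₂' v := inertia I b ν₁' ν₂' hb' v hvb
            have e2 : ν₂' v = ν₂ v := by simp [hν₂', hva]
            have hsd : v ∈ inps (diff a b) := by
              simp [inps, Finset.mem_symmDiff, hva, hvb]
            have e3 : ν₁' v = ν₁ v := h₁ v hsd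
            simp [hvb, ← e3, e1, e2]
          · have e2 : ν₁ v = ν₂ v := inertia I a ν₁ ν₂ ha v hva
            simp [hvb, e2]
      rw [← this]; exact hb''

end FLIF

/-- **Input-output determinacy, alternative form.** -/
theorem input_output_determinacy_alt {ρ V D : Type} [DecidableEq V] (I : ρ → Set (List D))
    (α : FLIF ρ V D) (ν₁ ν₂ ν₁' : V → D)
    (h : FLIF.sem I α ν₁ ν₂)
    (h₁ : ∀ v ∈ FLIF.inps α, ν₁' v = ν₁ v)
    (h₂ : ∀ v ∉ FLIF.outs α, ν₁' v = ν₁ v) :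
    FLIF.sem I α ν₁' ν₂ := by
  have hk := FLIF.key I α ν₁ ν₂ ν₁' h h₁
  have : (fun v => if v ∈ FLIF.outs α then ν₂ v else ν₁' v) = ν₂ := by
    funext v
    by_cases hv : v ∈ FLIF.outs α
    · simp [hv]
    · have e1 : ν₁' v = ν₁ v := h₂ v hv
      have e2 : ν₁ v = ν₂ v := FLIF.inertia I α ν₁ ν₂ h v hv
      simp [hv, e1, e2]
  rwa [this] at hk
end

section
/- The two forms of input-output determinacy are equivalent: for a fixed FLIF expression α satisfying the inertia property and the free variable property, the statement 'whenever (ν₁,ν₂) ∈ ⟦α⟧_D and ν₁′ = ν₁ on I(α), there exists ν₂′ with ν₂′ = ν₂ on O(α) and (ν₁′,ν₂′) ∈ ⟦α⟧_D' holds if and only if the statement 'whenever (ν₁,ν₂) ∈ ⟦α⟧_D and ν₁′ = ν₁ on I(α) and outside O(α), then (ν₁′,ν₂) ∈ ⟦α⟧_D' holds. -/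
/-!
Both forms say that a transition depends on the source valuation only through the inputs.
Going from the second form to the first, first replace `ν₁` by `ν₁'` on the outputs only, which
the second form allows; what is left of the change lies outside the free variables, where the
free variable property transports the transition. Conversely, by inertia the successor `ν₂'`
given by the first form agrees with `ν₂` outside the outputs as well, so the free variable
property turns `(ν₁', ν₂')` into `(ν₁', ν₂)`.
-/

section IODeterminacy

variable {V D : Type*} (R : (V → D) → (V → D) → Prop) (I O X : Set V)

def HasInertia : Prop :=
  ∀ ν₁ ν₂, R ν₁ ν₂ → ∀ v ∉ O, ν₁ v = ν₂ v

def HasFreeVarProperty : Prop :=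
  ∀ ν₁ ν₂ ν₁' ν₂', R ν₁ ν₂ → (∀ v ∈ X, ν₁' v = ν₁ v) → (∀ v ∈ X, ν₂' v = ν₂ v) →
    (∀ v ∉ X, ν₂' v = ν₁' v) → R ν₁' ν₂'

def IODetermined : Prop :=
  ∀ ν₁ ν₂ ν₁', R ν₁ ν₂ → (∀ v ∈ I, ν₁' v = ν₁ v) →
    ∃ ν₂', (∀ v ∈ O, ν₂' v = ν₂ v) ∧ R ν₁' ν₂'

/-- The pure outputs are the variables of `O \ I`. -/
def IgnoresPureOutputs : Prop :=
  ∀ ν₁ ν₂ ν₁', R ν₁ ν₂ → (∀ v ∈ I, ν₁' v = ν₁ v) → (∀ v ∉ O, ν₁' v = ν₁ v) → R ν₁' ν₂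

variable {R I O X}

theorem IODetermined.ignoresPureOutputs (hOX : O ⊆ X) (hInertia : HasInertia R O)
    (hFV : HasFreeVarProperty R X) (h : IODetermined R I O) : IgnoresPureOutputs R I O := by
  intro ν₁ ν₂ ν₁' hR hI hO
  obtain ⟨ν₂', hν₂', hR'⟩ := h ν₁ ν₂ ν₁' hR hI
  have hν₂ : ∀ v ∉ O, ν₂ v = ν₁' v := fun v hv => by rw [← hInertia ν₁ ν₂ hR v hv, hO v hv]
  refine hFV ν₁' ν₂' ν₁' ν₂ hR' (fun _ _ => rfl) (fun v _ => ?_) fun v hv => hν₂ v (hv <| hOX ·)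
  by_cases hvO : v ∈ O
  · exact (hν₂' v hvO).symm
  · rw [hν₂ v hvO, hInertia ν₁' ν₂' hR' v hvO]

theorem IgnoresPureOutputs.ioDetermined (hOX : O ⊆ X) (hXIO : X ⊆ I ∪ O)
    (hFV : HasFreeVarProperty R X) (h : IgnoresPureOutputs R I O) : IODetermined R I O := by
  classical
  intro ν₁ ν₂ ν₁' hR hI
  set σ := O.piecewise ν₁' ν₁
  have hσI : ∀ v ∈ I, σ v = ν₁ v := fun v hv => by
    by_cases hvO : v ∈ O
    · exact (Set.piecewise_eq_of_mem _ _ _ hvO).trans (hI v hv)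
    · exact Set.piecewise_eq_of_notMem _ _ _ hvO
  have hσO : ∀ v ∉ O, σ v = ν₁ v := fun v hv => Set.piecewise_eq_of_notMem _ _ _ hv
  have hν₁' : ∀ v ∈ X, ν₁' v = σ v := fun v hv => by
    by_cases hvO : v ∈ O
    · exact (Set.piecewise_eq_of_mem _ _ _ hvO).symm
    · rw [hσO v hvO, hI v ((hXIO hv).resolve_right hvO)]
  refine ⟨X.piecewise ν₂ ν₁', fun v hv => Set.piecewise_eq_of_mem _ _ _ (hOX hv), ?_⟩
  exact hFV σ ν₂ ν₁' _ (h ν₁ ν₂ σ hR hσI hσO) hν₁'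
    (fun v hv => Set.piecewise_eq_of_mem _ _ _ hv) fun v hv => Set.piecewise_eq_of_notMem _ _ _ hv

theorem ioDetermined_iff_ignoresPureOutputs (hOX : O ⊆ X) (hXIO : X ⊆ I ∪ O)
    (hInertia : HasInertia R O) (hFV : HasFreeVarProperty R X) :
    IODetermined R I O ↔ IgnoresPureOutputs R I O :=
  ⟨IODetermined.ignoresPureOutputs hOX hInertia hFV, IgnoresPureOutputs.ioDetermined hOX hXIO hFV⟩

end IODeterminacy

/-- The two forms of input-output determinacy are equivalent, for a fixed
expression `α` satisfying the inertia property and the free variable property. -/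
theorem determinacy_forms_equiv {ρ V D : Type} [DecidableEq V] (I : ρ → Set (List D))
    (α : FLIF ρ V D)
    (hInertia : ∀ ν₁ ν₂ : V → D, FLIF.sem I α ν₁ ν₂ →
      ∀ v ∉ FLIF.outs α, ν₁ v = ν₂ v)
    (hFV : ∀ ν₁ ν₂ ν₁' ν₂' : V → D, FLIF.sem I α ν₁ ν₂ →
      (∀ v ∈ FLIF.vars α, ν₁' v = ν₁ v) →
      (∀ v ∈ FLIF.vars α, ν₂' v = ν₂ v) →
      (∀ v ∉ FLIF.vars α, ν₂' v = ν₁' v) →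
      FLIF.sem I α ν₁' ν₂') :
    (∀ ν₁ ν₂ ν₁' : V → D, FLIF.sem I α ν₁ ν₂ →
        (∀ v ∈ FLIF.inps α, ν₁' v = ν₁ v) →
        ∃ ν₂' : V → D, (∀ v ∈ FLIF.outs α, ν₂' v = ν₂ v) ∧ FLIF.sem I α ν₁' ν₂')
    ↔
    (∀ ν₁ ν₂ ν₁' : V → D, FLIF.sem I α ν₁ ν₂ →
        (∀ v ∈ FLIF.inps α, ν₁' v = ν₁ v) →
        (∀ v ∉ FLIF.outs α, ν₁' v = ν₁ v) →
        FLIF.sem I α ν₁' ν₂) := by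
  have hXIO : (FLIF.vars α : Set V) ⊆ ↑(FLIF.inps α) ∪ ↑(FLIF.outs α) :=
    (Finset.coe_union _ _).subset
  exact ioDetermined_iff_ignoresPureOutputs (Finset.coe_subset.2 Finset.subset_union_right) hXIO
    hInertia hFV
end

section
/- Correctness of the executable-FO translation of io-disjoint composition: let α = α₁;α₂ be io-disjoint, and assume by induction that for i = 1,2 and all valuations ν: (ν,ν) ∈ ⟦αᵢ⟧_D iff D,ν ⊨ φᵢ, with FV(φᵢ) = vars(αᵢ). Let φ = (∃x₁…∃x_k φ₁) ∧ φ₂ where {x₁,…,x_k} = O(α₁) ∩ O(α₂). Then for all ν: (ν,ν) ∈ ⟦α⟧_D iff D,ν ⊨ φ. -/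
/-- First-order formulas over relation names `ρ` (with access patterns),
variables `V`, and constants from `D`. -/
inductive FO (ρ V D : Type) : Type
  | eqVar (x y : V)
  | eqConst (x : V) (c : D)
  | rel (R : ρ) (xs ys : List V)
  | not (φ : FO ρ V D)
  | and (φ ψ : FO ρ V D)
  | or (φ ψ : FO ρ V D)
  | ex (x : V) (φ : FO ρ V D)

namespace FO

variable {ρ V D : Type}

/-- Natural semantics: variables range over all of `D`. -/
def Sat (I : ρ → Set (List D)) [DecidableEq V] : FO ρ V D → (V → D) → Prop
  | eqVar x y, ν => ν x = ν y
  | eqConst x c, ν => ν x = c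
  | rel R xs ys, ν => (xs.map ν ++ ys.map ν) ∈ I R
  | not φ, ν => ¬ Sat I φ ν
  | and φ ψ, ν => Sat I φ ν ∧ Sat I ψ ν
  | or φ ψ, ν => Sat I φ ν ∨ Sat I ψ ν
  | ex x φ, ν => ∃ d : D, Sat I φ (Function.update ν x d)

variable [DecidableEq V]

/-- Free variables of a formula. -/
def FV : FO ρ V D → Finset V
  | eqVar x y => {x, y}
  | eqConst x _ => {x}
  | rel _ xs ys => xs.toFinset ∪ ys.toFinset
  | not φ => FV φ
  | and φ ψ => FV φ ∪ FV ψ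
  | or φ ψ => FV φ ∪ FV ψ
  | ex x φ => FV φ \ {x}

/-- `V`-executability (Nash–Ludäscher). -/
def Exec : Finset V → FO ρ V D → Prop
  | Vs, eqVar x y => x ∈ Vs ∨ y ∈ Vs
  | _, eqConst _ _ => True
  | Vs, rel _ xs _ => xs.toFinset ⊆ Vs
  | Vs, not φ => Exec Vs φ ∧ FV φ ⊆ Vs
  | Vs, and φ ψ => Exec Vs φ ∧ Exec (Vs ∪ FV φ) ψ
  | Vs, or φ ψ => Exec Vs φ ∧ Exec Vs ψ ∧ symmDiff (FV φ) (FV ψ) ⊆ Vs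
  | Vs, ex x φ => Exec (Vs \ {x}) φ

end FO

section Aux

variable {ρ V D : Type} [DecidableEq V]

open FLIF FO

lemma disj_aux {s t : Finset V} (h : s ∩ t = ∅) {v : V} (hs : v ∈ s) : v ∉ t := by
  intro ht
  exact absurd (Finset.mem_inter.mpr ⟨hs, ht⟩) (by simp [h])

lemma FLIF.ioDisjoint_inps_outs : ∀ α : FLIF ρ V D, ioDisjoint α → inps α ∩ outs α = ∅ := by
  intro α h
  cases α <;> first | exact h | exact h.2.2

lemma FLIF.inertia_s13 (I : ρ → Set (List D)) :
    ∀ (α : FLIF ρ V D) (ν₁ ν₂ : V → D), sem I α ν₁ ν₂ →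
      ∀ v ∉ outs α, ν₁ v = ν₂ v := by
  intro α
  induction α with
  | rel R xs ys =>
      intro ν₁ ν₂ h v hv
      exact h.2 v (by simpa [outs, List.mem_toFinset] using hv)
  | eqVar x y => intro ν₁ ν₂ h v _; rw [h.1]
  | eqConst x c => intro ν₁ ν₂ h v _; rw [h.1]
  | assignVar x y =>
      intro ν₁ ν₂ h v hv
      simp only [outs, Finset.mem_singleton] at hv
      rw [h, Function.update_of_ne hv]
  | assignConst x c =>
      intro ν₁ ν₂ h v hv
      simp only [outs, Finset.mem_singleton] at hv
      rw [h, Function.update_of_ne hv]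
  | comp a b iha ihb =>
      intro ν₁ ν₂ h v hv
      obtain ⟨μ, ha, hb⟩ := h
      simp only [outs, Finset.mem_union, not_or] at hv
      rw [iha _ _ ha v hv.1, ihb _ _ hb v hv.2]
  | union a b iha ihb =>
      intro ν₁ ν₂ h v hv
      simp only [outs, Finset.mem_union, not_or] at hv
      rcases h with h | h
      · exact iha _ _ h v hv.1
      · exact ihb _ _ h v hv.2
  | diff a b iha ihb =>
      intro ν₁ ν₂ h v hv
      exact iha _ _ h.1 v (by simpa [outs] using hv)

lemma FLIF.sem_det (I : ρ → Set (List D)) :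
    ∀ (α : FLIF ρ V D), ioDisjoint α → ∀ (ν₁ ν₂ ν₁' : V → D), sem I α ν₁ ν₂ →
      (∀ v ∈ inps α, ν₁' v = ν₁ v) →
      sem I α ν₁' (fun v => if v ∈ outs α then ν₂ v else ν₁' v) := by
  intro α
  induction α with
  | rel R xs ys =>
      intro hio ν₁ ν₂ ν₁' h hi
      simp only [ioDisjoint, inps, outs] at hio hi ⊢
      constructor
      · have hxs : xs.map ν₁' = xs.map ν₁ := by
          apply List.map_congr_left
          intro x hx
          exact hi x (List.mem_toFinset.mpr hx)
        have hys : ys.map (fun v => if v ∈ ys.toFinset then ν₂ v else ν₁' v) = ys.map ν₂ := by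
          apply List.map_congr_left
          intro y hy
          simp [List.mem_toFinset.mpr hy]
        rw [hxs]
        convert h.1 using 2
        exact hys
      · intro v hv
        simp [List.mem_toFinset, hv]
  | eqVar x y =>
      intro hio ν₁ ν₂ ν₁' h hi
      simp only [inps, Finset.mem_insert, Finset.mem_singleton] at hi
      refine ⟨?_, ?_⟩
      · funext v; simp [outs]
      · rw [hi x (Or.inl rfl), hi y (Or.inr rfl)]; exact h.2
  | eqConst x c =>
      intro hio ν₁ ν₂ ν₁' h hi
      simp only [inps, Finset.mem_singleton] at hi
      refine ⟨?_, ?_⟩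
      · funext v; simp [outs]
      · rw [hi x rfl]; exact h.2
  | assignVar x y =>
      intro hio ν₁ ν₂ ν₁' h hi
      simp only [ioDisjoint, inps, outs] at hio
      have hxy : y ≠ x := by
        intro hyx
        have : x ∈ ({y} : Finset V) ∩ {x} := by simp [hyx]
        simp [hio] at this
      simp only [inps, Finset.mem_singleton] at hi
      funext v
      simp only [outs, Finset.mem_singleton]
      by_cases hv : v = x
      · subst hv
        rw [h]
        simp [Function.update_of_ne hxy, hi y rfl]
      · simp [hv, Function.update_of_ne hv]
  | assignConst x c =>
      intro hio ν₁ ν₂ ν₁' h hi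
      funext v
      simp only [outs, Finset.mem_singleton]
      by_cases hv : v = x
      · subst hv; rw [h]; simp
      · simp [hv, Function.update_of_ne hv]
  | comp a b iha ihb =>
      intro hio ν₁ ν₂ ν₁' h hi
      obtain ⟨hioa, hiob, hioc⟩ := hio
      obtain ⟨μ, ha, hb⟩ := h
      simp only [inps] at hi hioc
      have ha' := iha hioa ν₁ μ ν₁' ha
        (fun v hv => hi v (Finset.mem_union_left _ hv))
      set μ' : V → D := fun v => if v ∈ outs a then μ v else ν₁' v with hμ'
      have hμ'μ : ∀ v ∈ inps b, μ' v = μ v := by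
        intro v hv
        by_cases hva : v ∈ outs a
        · simp [hμ', hva]
        · have hv' : v ∈ inps a ∪ (inps b \ outs a) :=
            Finset.mem_union_right _ (Finset.mem_sdiff.mpr ⟨hv, hva⟩)
          simp only [hμ', hva, if_neg]
          rw [hi v hv', FLIF.inertia_s13 I a ν₁ μ ha v hva]
          simp [hva]
      have hb' := ihb hiob μ ν₂ μ' hb hμ'μ
      refine ⟨μ', ha', ?_⟩
      have : (fun v => if v ∈ outs b then ν₂ v else μ' v) =
          (fun v => if v ∈ outs (FLIF.comp a b) then ν₂ v else ν₁' v) := by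
        funext v
        simp only [outs, Finset.mem_union, hμ']
        by_cases hvb : v ∈ outs b
        · simp [hvb]
        · by_cases hva : v ∈ outs a
          · simp [hva, hvb, ← FLIF.inertia_s13 I b μ ν₂ hb v hvb]
          · simp [hva, hvb]
      rwa [this] at hb'
  | union a b iha ihb =>
      intro hio ν₁ ν₂ ν₁' h hi
      obtain ⟨hioa, hiob, hioc⟩ := hio
      have hab : outs a = outs b := by
        have hsub : symmDiff (outs a) (outs b) = ∅ := by
          apply Finset.eq_empty_of_forall_notMem
          intro v hv
          have hv1 : v ∈ inps (FLIF.union a b) := by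
            simp only [inps]
            exact Finset.mem_union_right _ hv
          have hv2 : v ∈ outs (FLIF.union a b) := by
            simp only [outs, Finset.mem_union]
            rcases Finset.mem_symmDiff.mp hv with ⟨h', _⟩ | ⟨h', _⟩
            · exact Or.inl h'
            · exact Or.inr h'
          have := Finset.mem_inter.mpr ⟨hv1, hv2⟩
          rw [hioc] at this
          exact Finset.notMem_empty v this
        rw [← Finset.bot_eq_empty] at hsub
        exact symmDiff_eq_bot.mp hsub
      simp only [inps] at hi
      have houts : outs (FLIF.union a b) = outs a := by
        simp [outs, hab]
      rcases h with h | h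
      · left
        have := iha hioa ν₁ ν₂ ν₁' h
          (fun v hv => hi v (Finset.mem_union_left _ (Finset.mem_union_left _ hv)))
        rwa [houts]
      · right
        have := ihb hiob ν₁ ν₂ ν₁' h
          (fun v hv => hi v (Finset.mem_union_left _ (Finset.mem_union_right _ hv)))
        rwa [houts, hab]
  | diff a b iha ihb =>
      intro hio ν₁ ν₂ ν₁' h hi
      obtain ⟨hioa, hiob, hioc⟩ := hio
      obtain ⟨ha, hnb⟩ := h
      simp only [inps] at hi hioc
      have hia : ∀ v ∈ inps a, ν₁' v = ν₁ v := fun v hv =>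
        hi v (Finset.mem_union_left _ (Finset.mem_union_left _ hv))
      have hib : ∀ v ∈ inps b, ν₁' v = ν₁ v := fun v hv =>
        hi v (Finset.mem_union_left _ (Finset.mem_union_right _ hv))
      have houts : outs (FLIF.diff a b) = outs a := rfl
      refine ⟨by have := iha hioa ν₁ ν₂ ν₁' ha hia; rwa [houts], ?_⟩
      intro hsb
      apply hnb
      have hb' := ihb hiob ν₁' (fun v => if v ∈ outs (FLIF.diff a b) then ν₂ v else ν₁' v)
        ν₁ hsb (fun v hv => (hib v hv).symm)
      have heq : (fun v => if v ∈ outs b then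
          (if v ∈ outs (FLIF.diff a b) then ν₂ v else ν₁' v) else ν₁ v) = ν₂ := by
        funext v
        simp only [houts]
        by_cases hvb : v ∈ outs b
        · by_cases hva : v ∈ outs a
          · simp [hvb, hva]
          · have hvs : v ∈ symmDiff (outs a) (outs b) := by
              rw [Finset.mem_symmDiff]
              exact Or.inr ⟨hvb, hva⟩
            have hvi : v ∈ inps a ∪ inps b ∪ symmDiff (outs a) (outs b) :=
              Finset.mem_union_right _ hvs
            simp only [hvb, hva, if_true, if_false, if_neg]
            rw [hi v hvi]
            exact FLIF.inertia_s13 I a ν₁ ν₂ ha v hva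
        · simp only [hvb, if_neg, if_false]
          by_cases hva : v ∈ outs a
          · have hvs : v ∈ symmDiff (outs a) (outs b) := by
              rw [Finset.mem_symmDiff]
              exact Or.inl ⟨hva, hvb⟩
            have hvi : v ∈ inps a ∪ inps b ∪ symmDiff (outs a) (outs b) :=
              Finset.mem_union_right _ hvs
            have hmem : v ∈ (inps a ∪ inps b ∪ symmDiff (outs a) (outs b)) ∩
                (FLIF.diff a b).outs := Finset.mem_inter.mpr ⟨hvi, hva⟩
            rw [hioc] at hmem
            exact absurd hmem (Finset.notMem_empty v)
          · exact FLIF.inertia_s13 I a ν₁ ν₂ ha v hva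
      rwa [heq] at hb'

lemma FLIF.sem_det' (I : ρ → Set (List D)) (α : FLIF ρ V D) (h : ioDisjoint α)
    (ν₁ ν₂ ν₁' ν₂' : V → D) (hs : sem I α ν₁ ν₂)
    (hi : ∀ v ∈ inps α, ν₁' v = ν₁ v)
    (ho : ∀ v, ν₂' v = if v ∈ outs α then ν₂ v else ν₁' v) : sem I α ν₁' ν₂' := by
  have := FLIF.sem_det I α h ν₁ ν₂ ν₁' hs hi
  rwa [show ν₂' = _ from funext ho]

lemma sat_foldr_ex (I : ρ → Set (List D)) (φ : FO ρ V D) :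
    ∀ (l : List V) (ν μ : V → D), (∀ v, v ∉ l → ν v = μ v) → FO.Sat I φ μ →
      FO.Sat I (l.foldr FO.ex φ) ν := by
  intro l
  induction l with
  | nil =>
      intro ν μ hagree h
      have : ν = μ := funext fun v => hagree v (by simp)
      rwa [this]
  | cons x l ih =>
      intro ν μ hagree h
      refine ⟨μ x, ih (Function.update ν x (μ x)) μ ?_ h⟩
      intro v hv
      by_cases hvx : v = x
      · subst hvx; simp
      · rw [Function.update_of_ne hvx]
        exact hagree v (by simp [hvx, hv])

lemma sat_foldr_ex_elim (I : ρ → Set (List D)) (φ : FO ρ V D) :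
    ∀ (l : List V) (ν : V → D), FO.Sat I (l.foldr FO.ex φ) ν →
      ∃ μ : V → D, (∀ v, v ∉ l → ν v = μ v) ∧ FO.Sat I φ μ := by
  intro l
  induction l with
  | nil => intro ν h; exact ⟨ν, fun _ _ => rfl, h⟩
  | cons x l ih =>
      intro ν h
      obtain ⟨d, hd⟩ := h
      obtain ⟨μ, hagree, hμ⟩ := ih (Function.update ν x d) hd
      refine ⟨μ, ?_, hμ⟩
      intro v hv
      simp only [List.mem_cons, not_or] at hv
      rw [← hagree v hv.2, Function.update_of_ne hv.1]

end Aux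

/-- Correctness of the executable-FO translation of an io-disjoint composition:
if `φᵢ` translates `αᵢ` (on identical pairs) and `FV(φᵢ) = vars(αᵢ)`, then
`φ = (∃x₁…∃x_k φ₁) ∧ φ₂`, with `{x₁,…,x_k} = O(α₁) ∩ O(α₂)`,
translates `α₁;α₂`. -/
theorem exfo_translation_composition {ρ V D : Type} [DecidableEq V]
    (I : ρ → Set (List D)) (α₁ α₂ : FLIF ρ V D) (φ₁ φ₂ : FO ρ V D)
    (hio : FLIF.ioDisjoint (FLIF.comp α₁ α₂))
    (h1 : ∀ ν : V → D, FLIF.sem I α₁ ν ν ↔ FO.Sat I φ₁ ν)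
    (h2 : ∀ ν : V → D, FLIF.sem I α₂ ν ν ↔ FO.Sat I φ₂ ν)
    (hfv1 : FO.FV φ₁ = FLIF.vars α₁)
    (hfv2 : FO.FV φ₂ = FLIF.vars α₂)
    (l : List V) (hl : l.toFinset = FLIF.outs α₁ ∩ FLIF.outs α₂) :
    ∀ ν : V → D,
      FLIF.sem I (FLIF.comp α₁ α₂) ν ν ↔
        FO.Sat I (FO.and (l.foldr FO.ex φ₁) φ₂) ν := by
  obtain ⟨hio1, hio2, _⟩ := hio
  have hd1 := FLIF.ioDisjoint_inps_outs α₁ hio1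
  have hd2 := FLIF.ioDisjoint_inps_outs α₂ hio2
  have hlmem : ∀ v : V, v ∈ l ↔ (v ∈ FLIF.outs α₁ ∧ v ∈ FLIF.outs α₂) := by
    intro v
    rw [← List.mem_toFinset, hl, Finset.mem_inter]
  intro ν
  constructor
  · rintro ⟨μ, ha, hb⟩
    have hin1 := FLIF.inertia_s13 I α₁ ν μ ha
    have hin2 := FLIF.inertia_s13 I α₂ μ ν hb
    have hμμ : FLIF.sem I α₁ μ μ := by
      refine FLIF.sem_det' I α₁ hio1 ν μ μ μ ha ?_ ?_
      · intro v hv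
        exact (hin1 v (disj_aux hd1 hv)).symm
      · intro v; by_cases h : v ∈ FLIF.outs α₁ <;> simp [h]
    have hνν : FLIF.sem I α₂ ν ν := by
      refine FLIF.sem_det' I α₂ hio2 μ ν ν ν hb ?_ ?_
      · intro v hv
        exact (hin2 v (disj_aux hd2 hv)).symm
      · intro v; by_cases h : v ∈ FLIF.outs α₂ <;> simp [h]
    refine ⟨?_, (h2 ν).mp hνν⟩
    refine sat_foldr_ex I φ₁ l ν μ ?_ ((h1 μ).mp hμμ)
    intro v hv
    rw [hlmem v, not_and_or] at hv
    rcases hv with hv | hv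
    · exact hin1 v hv
    · exact (hin2 v hv).symm
  · rintro ⟨hex, hφ2⟩
    obtain ⟨μ, hagree, hφ1⟩ := sat_foldr_ex_elim I φ₁ l ν hex
    have hμμ : FLIF.sem I α₁ μ μ := (h1 μ).mpr hφ1
    have hνν : FLIF.sem I α₂ ν ν := (h2 ν).mpr hφ2
    have hout : ∀ v : V, v ∉ FLIF.outs α₁ ∨ v ∉ FLIF.outs α₂ → ν v = μ v := by
      intro v hv
      apply hagree
      rw [hlmem v]
      tauto
    refine ⟨μ, ?_, ?_⟩
    · refine FLIF.sem_det' I α₁ hio1 μ μ ν μ hμμ ?_ ?_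
      · intro v hv
        exact hout v (Or.inl (disj_aux hd1 hv))
      · intro v
        by_cases h : v ∈ FLIF.outs α₁
        · simp [h]
        · simp [h, (hout v (Or.inl h)).symm]
    · refine FLIF.sem_det' I α₂ hio2 ν ν μ ν hνν ?_ ?_
      · intro v hv
        exact (hout v (Or.inr (disj_aux hd2 hv))).symm
      · intro v
        by_cases h : v ∈ FLIF.outs α₂
        · simp [h]
        · simp [h, hout v (Or.inr h)]
end

section
/- For the difference case of the io-disjoint-to-FO translation, the translated formula is executable: if φ₁ is I(α₁)-executable with FV(φ₁) = I(α₁) ∪ O(α₁), φ₂ is I(α₂)-executable with FV(φ₂) = I(α₂) ∪ O(α₂), O(α₁) ⊆ O(α₂), and I(αᵢ) ∩ O(αᵢ) = ∅ for i=1,2, then φ₁ ∧ ¬φ₂ is V-executable for V = I(α₁) ∪ I(α₂) ∪ (O(α₂) \ O(α₁)). In particular FV(φ₂) ⊆ V ∪ FV(φ₁). -/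
namespace FO

variable {ρ V D : Type} [DecidableEq V]

theorem exec_mono {Vs Ws : Finset V} (h : Vs ⊆ Ws) : ∀ {φ : FO ρ V D}, Exec Vs φ → Exec Ws φ
  | eqVar _ _, hφ => hφ.imp (@h _) (@h _)
  | eqConst _ _, _ => trivial
  | rel _ _ _, hφ => hφ.trans h
  | not _, hφ => ⟨exec_mono h hφ.1, hφ.2.trans h⟩
  | and _ _, hφ => ⟨exec_mono h hφ.1, exec_mono (Finset.union_subset_union_left h) hφ.2⟩
  | or _ _, hφ => ⟨exec_mono h hφ.1, exec_mono h hφ.2.1, hφ.2.2.trans h⟩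
  | ex _ _, hφ => exec_mono (Finset.sdiff_subset_sdiff h le_rfl) hφ

theorem exec_and_not {Vs Ws₁ Ws₂ : Finset V} {φ ψ : FO ρ V D}
    (hφ : Exec Ws₁ φ) (hWs₁ : Ws₁ ⊆ Vs) (hψ : Exec Ws₂ ψ) (hWs₂ : Ws₂ ⊆ Vs)
    (hFV : FV ψ ⊆ Vs ∪ FV φ) : Exec Vs (and φ (not ψ)) :=
  ⟨exec_mono hWs₁ hφ, exec_mono (hWs₂.trans Finset.subset_union_left) hψ, hFV⟩

end FO

theorem Finset.union_subset_union_union_sdiff {α : Type} [DecidableEq α] (I₁ I₂ O₁ O₂ : Finset α) :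
    I₂ ∪ O₂ ⊆ (I₁ ∪ I₂ ∪ (O₂ \ O₁)) ∪ (I₁ ∪ O₁) := by
  intro x
  simp only [Finset.mem_union, Finset.mem_sdiff]
  tauto

theorem exec_difference_case_general {ρ V D : Type} [DecidableEq V]
    (I₁ I₂ O₁ O₂ : Finset V) (φ₁ φ₂ : FO ρ V D)
    (he1 : FO.Exec I₁ φ₁) (hfv1 : FO.FV φ₁ = I₁ ∪ O₁)
    (he2 : FO.Exec I₂ φ₂) (hfv2 : FO.FV φ₂ = I₂ ∪ O₂) :
    FO.Exec (I₁ ∪ I₂ ∪ (O₂ \ O₁)) (FO.and φ₁ (FO.not φ₂)) ∧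
      FO.FV φ₂ ⊆ (I₁ ∪ I₂ ∪ (O₂ \ O₁)) ∪ FO.FV φ₁ := by
  have hFV : FO.FV φ₂ ⊆ (I₁ ∪ I₂ ∪ (O₂ \ O₁)) ∪ FO.FV φ₁ := by
    rw [hfv1, hfv2]
    exact Finset.union_subset_union_union_sdiff I₁ I₂ O₁ O₂
  have hI₁ : I₁ ⊆ I₁ ∪ I₂ ∪ (O₂ \ O₁) :=
    Finset.subset_union_left.trans Finset.subset_union_left
  have hI₂ : I₂ ⊆ I₁ ∪ I₂ ∪ (O₂ \ O₁) :=
    Finset.subset_union_right.trans Finset.subset_union_left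
  exact ⟨FO.exec_and_not he1 hI₁ he2 hI₂ hFV, hFV⟩

/-- Executability of the translated formula for an io-disjoint difference:
`φ₁ ∧ ¬φ₂` is `V`-executable for `V = I(α₁) ∪ I(α₂) ∪ (O(α₂) \ O(α₁))`;
in particular `FV(φ₂) ⊆ V ∪ FV(φ₁)`. -/
theorem exec_difference_case {ρ V D : Type} [DecidableEq V]
    (I₁ I₂ O₁ O₂ : Finset V) (φ₁ φ₂ : FO ρ V D)
    (he1 : FO.Exec I₁ φ₁) (hfv1 : FO.FV φ₁ = I₁ ∪ O₁)
    (he2 : FO.Exec I₂ φ₂) (hfv2 : FO.FV φ₂ = I₂ ∪ O₂)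
    (hOO : O₁ ⊆ O₂) (h1 : I₁ ∩ O₁ = ∅) (h2 : I₂ ∩ O₂ = ∅) :
    FO.Exec (I₁ ∪ I₂ ∪ (O₂ \ O₁)) (FO.and φ₁ (FO.not φ₂)) ∧
      FO.FV φ₂ ⊆ (I₁ ∪ I₂ ∪ (O₂ \ O₁)) ∪ FO.FV φ₁ :=
  exec_difference_case_general I₁ I₂ O₁ O₂ φ₁ φ₂ he1 hfv1 he2 hfv2
end

section
/- In the access-restricted setting, evaluation of V-executable formulas is domain-bounded: if φ is V-executable, D is a finite instance, ν_in is a valuation on V, and ν is a valuation on V ∪ FV(φ) with ν_in ⊆ ν and D,ν ⊨ φ, then ν takes values only in adom(D) ∪ ν_in(V), where adom(D) is the set of constants appearing in D. (Assume, for simplicity, that φ contains no constants.) -/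
namespace FO

/-- `φ` contains no constants. -/
def noConst {ρ V D : Type} : FO ρ V D → Prop
  | eqConst _ _ => False
  | not φ => noConst φ
  | and φ ψ => noConst φ ∧ noConst ψ
  | or φ ψ => noConst φ ∧ noConst ψ
  | ex _ φ => noConst φ
  | _ => True

/-- The active domain of an instance: all constants appearing in its relations. -/
def adom {ρ D : Type} (I : ρ → Set (List D)) : Set D :=
  {d | ∃ (R : ρ) (t : List D), t ∈ I R ∧ d ∈ t}

end FO

/-- Evaluation of `V`-executable formulas is domain-bounded: if `φ` is
constant-free and `V`-executable, `D` is a finite instance, and `ν` satisfies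
`φ` (with `ν` extending the input valuation `ν|_V`), then on `V ∪ FV(φ)` the
valuation `ν` takes values only in `adom(D) ∪ ν(V)`. -/
theorem executable_domain_bounded {ρ V D : Type} [DecidableEq V]
    (I : ρ → Set (List D)) (hfin : ∀ R : ρ, (I R).Finite)
    (φ : FO ρ V D) (Vs : Finset V)
    (hexec : FO.Exec Vs φ) (hnc : FO.noConst φ)
    (ν : V → D) (hsat : FO.Sat I φ ν) :
    ∀ x ∈ Vs ∪ FO.FV φ, ν x ∈ FO.adom I ∪ (fun y : V => ν y) '' ↑Vs := by
  induction φ generalizing Vs ν with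
  | eqVar a b =>
    intro x hx
    simp only [FO.FV, Finset.mem_union, Finset.mem_insert, Finset.mem_singleton] at hx
    rcases hx with hx | hx | hx
    · exact Or.inr ⟨x, hx, rfl⟩
    · rw [hx]
      rcases hexec with h | h
      · exact Or.inr ⟨a, h, rfl⟩
      · exact Or.inr ⟨b, h, hsat.symm⟩
    · rw [hx]
      rcases hexec with h | h
      · exact Or.inr ⟨a, h, hsat⟩
      · exact Or.inr ⟨b, h, rfl⟩
  | eqConst a c => exact absurd hnc (by simp [FO.noConst])
  | rel R xs ys =>
    intro x hx
    simp only [FO.FV, Finset.mem_union, List.mem_toFinset] at hx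
    rcases hx with hx | hx | hx
    · exact Or.inr ⟨x, hx, rfl⟩
    · exact Or.inl ⟨R, _, hsat, List.mem_append.mpr (Or.inl (List.mem_map_of_mem (f := ν) hx))⟩
    · exact Or.inl ⟨R, _, hsat, List.mem_append.mpr (Or.inr (List.mem_map_of_mem (f := ν) hx))⟩
  | not φ ih =>
    obtain ⟨e1, e2⟩ := hexec
    intro x hx
    simp only [FO.FV, Finset.mem_union] at hx
    rcases hx with hx | hx
    · exact Or.inr ⟨x, hx, rfl⟩
    · exact Or.inr ⟨x, e2 hx, rfl⟩
  | and φ ψ ihφ ihψ =>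
    obtain ⟨e1, e2⟩ := hexec; obtain ⟨n1, n2⟩ := hnc; obtain ⟨s1, s2⟩ := hsat
    have Hφ := ihφ Vs e1 n1 ν s1
    have Hψ := ihψ (Vs ∪ FO.FV φ) e2 n2 ν s2
    intro x hx
    simp only [FO.FV, Finset.mem_union] at hx
    rcases hx with hx | hx | hx
    · exact Or.inr ⟨x, hx, rfl⟩
    · exact Hφ x (by simp [hx])
    · have h := Hψ x (by simp [hx])
      rcases h with h | ⟨y, hy, hyx⟩
      · exact Or.inl h
      · simp only [Finset.coe_union, Set.mem_union, Finset.mem_coe] at hy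
        rcases hy with hy | hy
        · exact Or.inr ⟨y, hy, hyx⟩
        · rcases Hφ y (by simp [hy]) with h | ⟨z, hz, hzy⟩
          · exact Or.inl (hyx ▸ h)
          · exact Or.inr ⟨z, hz, hzy.trans hyx⟩
  | or φ ψ ihφ ihψ =>
    obtain ⟨e1, e2, e3⟩ := hexec; obtain ⟨n1, n2⟩ := hnc
    intro x hx
    simp only [FO.FV, Finset.mem_union] at hx
    rcases hx with hx | hx
    · exact Or.inr ⟨x, hx, rfl⟩
    · rcases hsat with s | s
      · by_cases hxφ : x ∈ FO.FV φ
        · exact ihφ Vs e1 n1 ν s x (by simp [hxφ])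
        · have hxψ : x ∈ FO.FV ψ := hx.resolve_left hxφ
          have : x ∈ Vs := e3 (by simp [symmDiff, hxψ, hxφ])
          exact Or.inr ⟨x, this, rfl⟩
      · by_cases hxψ : x ∈ FO.FV ψ
        · exact ihψ Vs e2 n2 ν s x (by simp [hxψ])
        · have hxφ : x ∈ FO.FV φ := hx.resolve_right hxψ
          have : x ∈ Vs := e3 (by simp [symmDiff, hxψ, hxφ])
          exact Or.inr ⟨x, this, rfl⟩
  | ex y φ ih =>
    obtain ⟨d, hd⟩ := hsat
    have H := ih (Vs \ {y}) hexec hnc (Function.update ν y d) hd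
    intro x hx
    simp only [FO.FV, Finset.mem_union, Finset.mem_sdiff, Finset.mem_singleton] at hx
    rcases hx with hx | ⟨hxφ, hxy⟩
    · exact Or.inr ⟨x, hx, rfl⟩
    · have h := H x (by simp [hxφ])
      rw [Function.update_of_ne hxy] at h
      rcases h with h | ⟨z, hz, hzx⟩
      · exact Or.inl h
      · simp only [Finset.coe_sdiff, Finset.coe_singleton, Set.mem_diff,
          Finset.mem_coe, Set.mem_singleton_iff] at hz
        have hzx' : Function.update ν y d z = ν x := hzx
        rw [Function.update_of_ne hz.2] at hzx'
        exact Or.inr ⟨z, hz.1, hzx'⟩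
end

section
/- Expressiveness gap without assignments: over the schema with a nullary relation S and a binary relation T of input arity one, fix the instance D with D(S) nonempty and D(T) = ∅. Then (1) for every FLIF expression β without assignment atoms, either ⟦β⟧_D = ∅ or ⟦β⟧_D = ⟦γ⟧_D for some assignment-free expression γ not mentioning T; and (2) for every assignment-free expression γ not mentioning T and every (ν₁,ν₂) ∈ ⟦γ⟧_D, we have ν₁ = ν₂. Consequently, no assignment-free FLIF expression β satisfies: for every valuation ν there exists ν′ with ν′(x₁) = ν(x) and (ν, ν′) ∈ ⟦β⟧_D, where x ≠ x₁ are distinct variables (i.e., the io-disjoint rewriting of S(;) ∪ T(x;x) with x renamed to x₁ cannot avoid variable assignment). -/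
/-!
Because `D(T) = ∅`, every atom `T(u;v)` can be replaced by the empty `T`-free expression
`S(;) \ S(;)` without changing the semantics. A `T`-free expression only tests its input
valuation and never changes it, so no assignment-free expression can move the value of `x`
into a distinct variable `x₁`.
-/

/-- Assignment-free FLIF expressions over the schema with a nullary relation
`S` and a binary relation `T` of input arity one. -/
inductive AFExp (V D : Type) : Type
  | S
  | T (u v : V)
  | eqVar (x y : V)
  | eqConst (x : V) (c : D)
  | comp (a b : AFExp V D)
  | union (a b : AFExp V D)
  | diff (a b : AFExp V D)

namespace AFExp

variable {V D : Type}

/-- Semantics over the fixed instance `D` with `D(S)` nonempty and `D(T) = ∅`: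
`⟦S(;)⟧` is the identity relation on valuations, `⟦T(u;v)⟧` is empty. -/
def sem : AFExp V D → (V → D) → (V → D) → Prop
  | S, ν₁, ν₂ => ν₁ = ν₂
  | T _ _, _, _ => False
  | eqVar x y, ν₁, ν₂ => ν₁ = ν₂ ∧ ν₁ x = ν₁ y
  | eqConst x c, ν₁, ν₂ => ν₁ = ν₂ ∧ ν₁ x = c
  | comp a b, ν₁, ν₂ => ∃ ν, sem a ν₁ ν ∧ sem b ν ν₂
  | union a b, ν₁, ν₂ => sem a ν₁ ν₂ ∨ sem b ν₁ ν₂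
  | diff a b, ν₁, ν₂ => sem a ν₁ ν₂ ∧ ¬ sem b ν₁ ν₂

/-- The expression mentions the relation `T`. -/
def mentionsT : AFExp V D → Prop
  | T _ _ => True
  | comp a b => mentionsT a ∨ mentionsT b
  | union a b => mentionsT a ∨ mentionsT b
  | diff a b => mentionsT a ∨ mentionsT b
  | _ => False

def eraseT : AFExp V D → AFExp V D
  | T _ _ => diff S S
  | comp a b => comp (eraseT a) (eraseT b)
  | union a b => union (eraseT a) (eraseT b)
  | diff a b => diff (eraseT a) (eraseT b)
  | β => β

theorem not_mentionsT_eraseT (β : AFExp V D) : ¬ (eraseT β).mentionsT := by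
  induction β <;> simp_all [eraseT, mentionsT]

theorem sem_eraseT (β : AFExp V D) (ν₁ ν₂ : V → D) : sem β ν₁ ν₂ ↔ sem (eraseT β) ν₁ ν₂ := by
  induction β generalizing ν₁ ν₂ <;> simp_all [eraseT, sem]

theorem eq_of_sem_of_not_mentionsT {γ : AFExp V D} (hγ : ¬ γ.mentionsT) {ν₁ ν₂ : V → D}
    (h : sem γ ν₁ ν₂) : ν₁ = ν₂ := by
  induction γ generalizing ν₁ ν₂ with
  | S => exact h
  | T => exact h.elim
  | eqVar => exact h.1
  | eqConst => exact h.1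
  | comp a b iha ihb =>
    simp only [mentionsT, not_or] at hγ
    obtain ⟨ν, ha, hb⟩ := h
    exact (iha hγ.1 ha).trans (ihb hγ.2 hb)
  | union a b iha ihb =>
    simp only [mentionsT, not_or] at hγ
    exact h.elim (iha hγ.1) (ihb hγ.2)
  | diff a b iha _ =>
    simp only [mentionsT, not_or] at hγ
    exact iha hγ.1 h.1

theorem eq_of_sem {β : AFExp V D} {ν₁ ν₂ : V → D} (h : sem β ν₁ ν₂) : ν₁ = ν₂ :=
  eq_of_sem_of_not_mentionsT (not_mentionsT_eraseT β) ((sem_eraseT β ν₁ ν₂).1 h)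

end AFExp

theorem Function.exists_apply_ne_apply {V D : Type} [Nontrivial D] {x x₁ : V} (hx : x ≠ x₁) :
    ∃ ν : V → D, ν x₁ ≠ ν x := by
  classical
  obtain ⟨a, b, hab⟩ := exists_pair_ne D
  exact ⟨Function.update (fun _ => a) x b, by simpa [hx.symm] using hab⟩

/-- Expressiveness gap without assignments, over the instance with `D(S)`
nonempty and `D(T) = ∅`:
(1) every assignment-free expression `β` has empty semantics or the same
semantics as some assignment-free expression `γ` not mentioning `T`;
(2) assignment-free expressions not mentioning `T` only define identical pairs;
consequently, no assignment-free expression `β` satisfies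
`∀ ν ∃ ν', ν'(x₁) = ν(x) ∧ (ν, ν') ∈ ⟦β⟧_D` (for distinct variables `x ≠ x₁`),
i.e., the io-disjoint rewriting of `S(;) ∪ T(x;x)` (renaming `x` to `x₁`)
cannot avoid variable assignment. -/
theorem no_assignment_free_rewriting {V D : Type} [Nontrivial D]
    (x x₁ : V) (hx : x ≠ x₁) :
    (∀ β : AFExp V D,
        (∀ ν₁ ν₂ : V → D, ¬ AFExp.sem β ν₁ ν₂) ∨
        ∃ γ : AFExp V D, ¬ AFExp.mentionsT γ ∧
          ∀ ν₁ ν₂ : V → D, AFExp.sem β ν₁ ν₂ ↔ AFExp.sem γ ν₁ ν₂) ∧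
    (∀ γ : AFExp V D, ¬ AFExp.mentionsT γ →
        ∀ ν₁ ν₂ : V → D, AFExp.sem γ ν₁ ν₂ → ν₁ = ν₂) ∧
    (∀ β : AFExp V D,
        ¬ ∀ ν : V → D, ∃ ν' : V → D, ν' x₁ = ν x ∧ AFExp.sem β ν ν') := by
  refine ⟨fun β => .inr ⟨β.eraseT, β.not_mentionsT_eraseT, β.sem_eraseT⟩,
    fun _ hγ _ _ => AFExp.eq_of_sem_of_not_mentionsT hγ, fun β hβ => ?_⟩
  obtain ⟨ν, hν⟩ := Function.exists_apply_ne_apply (D := D) hx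
  obtain ⟨ν', hν', hsem⟩ := hβ ν
  rw [← AFExp.eq_of_sem hsem] at hν'
  exact hν hν'
end
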